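/- The constant √(ζ(4) − ζ(5)) in the bound ‖f‖_∞ ≤ √(ζ(4)−ζ(5))‖f‖_{H²₂} is sharp: for f(z) = ∑_{n=0}^∞ ((n+1)/(n+2)⁵) zⁿ one has ‖f‖²_{H²₂} = ζ(4) − ζ(5) and sup_{|z|<1}|f(z)| = ζ(4) − ζ(5). -/
import Mathlib




open Complex Filter Topology

noncomputable def Aa (n : ℕ) : ℝ := ((n:ℝ)+1)/((n:ℝ)+2)^5

lemma Aa_nonneg (n : ℕ) : 0 ≤ Aa n := by unfold Aa; positivity

lemma Aa_summable : Summable Aa := by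
  have h2 : Summable (fun n : ℕ => 1 / ((n:ℝ)+1)^2) := by
    have := (summable_nat_add_iff (f := fun n : ℕ => 1/(n:ℝ)^2) 1).mpr
      (Real.summable_one_div_nat_pow.mpr one_lt_two)
    refine this.congr fun n => ?_
    push_cast; ring
  refine h2.of_nonneg_of_le Aa_nonneg fun n => ?_
  unfold Aa
  rw [div_le_div_iff₀ (by positivity) (by positivity)]
  have : (0:ℝ) ≤ (n:ℝ) := n.cast_nonneg
  nlinarith [sq_nonneg ((n:ℝ)+1), pow_pos (by linarith : (0:ℝ) < (n:ℝ)+2) 3]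

lemma gsummable (p : ℕ) (hp : 1 < p) : Summable (fun n : ℕ => 1 / ((n:ℝ)+1)^p) := by
  have := (summable_nat_add_iff (f := fun n : ℕ => 1/(n:ℝ)^p) 1).mpr
    (Real.summable_one_div_nat_pow.mpr hp)
  refine this.congr fun n => ?_
  push_cast; ring

lemma zeta_nat (p : ℕ) (hp : 1 < p) :
    (riemannZeta p).re = ∑' n : ℕ, 1 / ((n:ℝ)+1)^p := by
  rw [zeta_eq_tsum_one_div_nat_add_one_cpow (by simpa using hp)]
  have : ∀ n : ℕ, (1 / ((n:ℂ)+1) ^ (p:ℂ)) = ((1 / ((n:ℝ)+1)^p : ℝ) : ℂ) := by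
    intro n
    rw [Complex.cpow_natCast]
    push_cast
    ring
  rw [tsum_congr this, ← Complex.ofReal_tsum, Complex.ofReal_re]

lemma key_sum : ∑' n, Aa n = (riemannZeta 4 - riemannZeta 5).re := by
  have h4 := gsummable 4 (by norm_num)
  have h5 := gsummable 5 (by norm_num)
  have hsub : Summable (fun n : ℕ => 1/((n:ℝ)+1)^4 - 1/((n:ℝ)+1)^5) := h4.sub h5
  have e1 : (riemannZeta 4 - riemannZeta 5).re
      = ∑' n : ℕ, (1/((n:ℝ)+1)^4 - 1/((n:ℝ)+1)^5) := by
    rw [Complex.sub_re, show ((4:ℂ)) = ((4:ℕ):ℂ) by norm_num,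
      show ((5:ℂ)) = ((5:ℕ):ℂ) by norm_num, zeta_nat 4 (by norm_num),
      zeta_nat 5 (by norm_num), Summable.tsum_sub h4 h5]
  rw [e1, Summable.tsum_eq_zero_add hsub]
  norm_num
  exact tsum_congr fun n => by unfold Aa; push_cast; field_simp; ring

lemma c_eq (n : ℕ) : (((n:ℂ)+1)/((n:ℂ)+2)^5) = ((Aa n : ℝ) : ℂ) := by
  unfold Aa; push_cast; ring

lemma norm_term (n : ℕ) (z : ℂ) :
    ‖(((n:ℂ)+1)/((n:ℂ)+2)^5) * z^n‖ = Aa n * ‖z‖^n := by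
  rw [c_eq, norm_mul, norm_pow, Complex.norm_real,
    Real.norm_of_nonneg (Aa_nonneg n)]

lemma summable_term (z : ℂ) (hz : ‖z‖ < 1) :
    Summable (fun n => Aa n * ‖z‖^n) := by
  refine Aa_summable.of_nonneg_of_le (fun n => mul_nonneg (Aa_nonneg n) (by positivity)) fun n => ?_
  have : ‖z‖^n ≤ 1 := pow_le_one₀ (norm_nonneg z) hz.le
  nlinarith [Aa_nonneg n]

lemma upper (z : ℂ) (hz : ‖z‖ < 1) :
    ‖∑' n : ℕ, (((n:ℂ)+1)/((n:ℂ)+2)^5) * z^n‖ ≤ ∑' n, Aa n := by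
  have hs : Summable (fun n : ℕ => ‖(((n:ℂ)+1)/((n:ℂ)+2)^5) * z^n‖) := by
    simpa only [norm_term] using summable_term z hz
  refine (norm_tsum_le_tsum_norm hs).trans ?_
  rw [tsum_congr fun n => norm_term n z]
  refine Summable.tsum_le_tsum (fun n => ?_) (summable_term z hz) Aa_summable
  have : ‖z‖^n ≤ 1 := pow_le_one₀ (norm_nonneg z) hz.le
  nlinarith [Aa_nonneg n]

lemma norm_at_real (r : ℝ) (h0 : 0 ≤ r) (h1 : r < 1) :
    ‖∑' n : ℕ, (((n:ℂ)+1)/((n:ℂ)+2)^5) * (r:ℂ)^n‖ = ∑' n, Aa n * r^n := by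
  have hz : ‖(r:ℂ)‖ < 1 := by rwa [Complex.norm_real, Real.norm_of_nonneg h0]
  have hs : Summable (fun n => Aa n * r^n) := by
    have := summable_term (r:ℂ) hz
    rwa [Complex.norm_real, Real.norm_of_nonneg h0] at this
  have : (∑' n : ℕ, (((n:ℂ)+1)/((n:ℂ)+2)^5) * (r:ℂ)^n)
      = ((∑' n, Aa n * r^n : ℝ) : ℂ) := by
    rw [Complex.ofReal_tsum]
    exact tsum_congr fun n => by rw [c_eq]; push_cast; ring
  rw [this, Complex.norm_real, Real.norm_of_nonneg]
  exact tsum_nonneg fun n => mul_nonneg (Aa_nonneg n) (pow_nonneg h0 n)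

/-- Sharpness of the constant `√(ζ(4)-ζ(5))`: for `f(z) = ∑ ((n+1)/(n+2)⁵) zⁿ`,
`‖f‖²_{H²₂} = ζ(4) - ζ(5)` and `sup_{|z|<1} |f(z)| = ζ(4) - ζ(5)`. -/
theorem stmt6 :
    (∑' n : ℕ, ((n : ℝ) + 2) ^ 5 / ((n : ℝ) + 1) * ‖(((n : ℂ) + 1) / ((n : ℂ) + 2) ^ 5)‖ ^ 2)
      = (riemannZeta 4 - riemannZeta 5).re ∧
    (⨆ z : Metric.ball (0 : ℂ) 1,
        ‖∑' n : ℕ, (((n : ℂ) + 1) / ((n : ℂ) + 2) ^ 5) * (z : ℂ) ^ n‖)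
      = (riemannZeta 4 - riemannZeta 5).re := by
  constructor
  · rw [← key_sum]
    refine tsum_congr fun n => ?_
    rw [c_eq, Complex.norm_real, Real.norm_of_nonneg (Aa_nonneg n)]
    unfold Aa
    have h1 : (0:ℝ) < (n:ℝ)+1 := by positivity
    have h2 : (0:ℝ) < (n:ℝ)+2 := by positivity
    field_simp
  · rw [← key_sum]
    set S := ∑' n, Aa n with hSdef
    have hbdd : BddAbove (Set.range fun z : Metric.ball (0:ℂ) 1 =>
        ‖∑' n : ℕ, (((n:ℂ)+1)/((n:ℂ)+2)^5) * (z:ℂ)^n‖) := by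
      refine ⟨S, ?_⟩
      rintro _ ⟨z, rfl⟩
      exact upper z (mem_ball_zero_iff.mp z.2)
    haveI : Nonempty ↑(Metric.ball (0:ℂ) 1) := ⟨⟨0, by simp⟩⟩
    refine le_antisymm (ciSup_le fun z => upper z (mem_ball_zero_iff.mp z.2)) ?_
    refine le_of_forall_pos_le_add fun ε hε => ?_
    have htend := Aa_summable.hasSum.tendsto_sum_nat
    obtain ⟨N, hN⟩ := (htend.eventually (eventually_gt_nhds
      (by linarith : S - ε/2 < S))).exists
    have hcont : Continuous (fun r : ℝ => ∑ n ∈ Finset.range N, Aa n * r^n) := by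
      exact continuous_finset_sum _ fun n _ => by continuity
    have hne : (𝓝[Set.Ico (0:ℝ) 1] (1:ℝ)).NeBot := by
      rw [← mem_closure_iff_nhdsWithin_neBot, closure_Ico (by norm_num : (0:ℝ) ≠ 1)]
      exact Set.right_mem_Icc.mpr (by norm_num)
    have htend2 : Filter.Tendsto (fun r : ℝ => ∑ n ∈ Finset.range N, Aa n * r^n)
        (𝓝[Set.Ico (0:ℝ) 1] 1) (𝓝 (∑ n ∈ Finset.range N, Aa n)) := by
      have h := (hcont.tendsto 1).mono_left (nhdsWithin_le_nhds (s := Set.Ico (0:ℝ) 1))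
      simpa using h
    have hlt : S - ε < ∑ n ∈ Finset.range N, Aa n := by linarith
    obtain ⟨r, hr1, hr2⟩ := ((htend2.eventually (eventually_gt_nhds hlt)).and
      self_mem_nhdsWithin).exists
    have hz : ‖(r:ℂ)‖ < 1 := by
      rw [Complex.norm_real, Real.norm_of_nonneg hr2.1]; exact hr2.2
    have hsr : Summable (fun n => Aa n * r^n) := by
      have := summable_term (r:ℂ) hz
      rwa [Complex.norm_real, Real.norm_of_nonneg hr2.1] at this
    have hrmem : ((r:ℂ)) ∈ Metric.ball (0:ℂ) 1 := mem_ball_zero_iff.mpr hz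
    have hle : ∑ n ∈ Finset.range N, Aa n * r^n
        ≤ ‖∑' n : ℕ, (((n:ℂ)+1)/((n:ℂ)+2)^5) * ((r:ℂ))^n‖ := by
      rw [norm_at_real r hr2.1 hr2.2]
      exact Summable.sum_le_tsum (Finset.range N)
        (fun n _ => mul_nonneg (Aa_nonneg n) (pow_nonneg hr2.1 n)) hsr
    have hsup : ‖∑' n : ℕ, (((n:ℂ)+1)/((n:ℂ)+2)^5) * ((r:ℂ))^n‖
        ≤ ⨆ z : Metric.ball (0:ℂ) 1,
          ‖∑' n : ℕ, (((n:ℂ)+1)/((n:ℂ)+2)^5) * (z:ℂ)^n‖ :=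
      le_ciSup hbdd ⟨(r:ℂ), hrmem⟩
    linarith
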